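/- Let d2, a2, h, q > 0 and 0 ≤ x1 < L. If w is a solution of the upstream toxicant boundary value problem on [x1, L] and w(x) > 0 for all x ∈ [x1, L], then for every x ∈ [x1, L] one has w(x) ≤ w(L) < h·(L − x1)/a2. -/

import Mathlib

open Set Real


/-- If the derivative is positive on the open interval, the function increases. -/
lemma upstream_aux_lt (f : ℝ → ℝ) (c e : ℝ) (hf : ContinuousOn f (Icc c e)) (hce : c < e)
    (hpos : ∀ x ∈ Ioo c e, 0 < deriv f x) : f c < f e :=
  (strictMonoOn_of_deriv_pos (convex_Icc c e) hf (by simpa [interior_Icc] using hpos))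
    (left_mem_Icc.2 hce.le) (right_mem_Icc.2 hce.le) hce

/-- Local positivity of a continuous function to the right. -/
lemma upstream_aux_local (g : ℝ → ℝ) (hg : Continuous g) (c : ℝ) (h : 0 < g c) :
    ∃ δ > 0, ∀ x ∈ Icc c (c + δ), 0 < g x := by
  have h2 : ∀ᶠ x in nhds c, 0 < g x := hg.continuousAt.eventually (lt_mem_nhds h)
  obtain ⟨ε, hε, hb⟩ := Metric.eventually_nhds_iff.mp h2
  refine ⟨ε/2, by linarith, fun x hx => hb ?_⟩
  rw [Real.dist_eq, abs_lt]
  constructor <;> [linarith [hx.1]; linarith [hx.2]]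

/-- A continuous function with positive derivative at `c` takes a larger value
somewhere in `(c, L]`. -/
lemma upstream_aux_exists_gt (f : ℝ → ℝ) (hf : Continuous f) (hf' : Continuous (deriv f))
    (c L : ℝ) (hcL : c < L) (hd : 0 < deriv f c) : ∃ e, c < e ∧ e ≤ L ∧ f c < f e := by
  obtain ⟨δ, hδ, hb⟩ := upstream_aux_local (deriv f) hf' c hd
  refine ⟨min (c + δ) L, lt_min (by linarith) hcL, min_le_right _ _, ?_⟩
  apply upstream_aux_lt f c _ hf.continuousOn (lt_min (by linarith) hcL)
  intro x hx
  exact hb x ⟨hx.1.le, le_trans hx.2.le (min_le_left _ _)⟩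



/-- `w` is a solution of the upstream toxicant boundary value problem with
parameters `d2, a2, h, q` on the interval `[x1, L]`. -/
def IsUpstreamSolution (d2 a2 h q x1 L : ℝ) (w : ℝ → ℝ) : Prop :=
  ContDiff ℝ 2 w ∧
  (∀ x ∈ Set.Icc x1 L,
      d2 * deriv (deriv w) x - a2 * deriv w x + h - q * w x = 0) ∧
  d2 * deriv w x1 - a2 * w x1 = 0 ∧ deriv w L = 0

/-- for a positive solution of the upstream problem,
`w x ≤ w L < h·(L − x1)/a2` on `[x1, L]`. -/
theorem upstream_max_at_L
    (d2 a2 h q x1 L : ℝ) (w : ℝ → ℝ)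
    (hd2 : 0 < d2) (ha2 : 0 < a2) (hh : 0 < h) (hq : 0 < q)
    (hx1 : 0 ≤ x1) (hx1L : x1 < L)
    (hw : IsUpstreamSolution d2 a2 h q x1 L w)
    (hpos : ∀ x ∈ Set.Icc x1 L, 0 < w x) :
    (∀ x ∈ Set.Icc x1 L, w x ≤ w L) ∧ w L < h * (L - x1) / a2 := by
  obtain ⟨hC2, hode, hbc1, hbc2⟩ := hw
  -- regularity facts
  have hdw : Differentiable ℝ w := hC2.differentiable two_ne_zero
  have hcw : Continuous w := hdw.continuous
  have hC1 : ContDiff ℝ 1 (deriv w) := by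
    have : ContDiff ℝ (1 + 1) w := by norm_num [hC2]
    exact (contDiff_succ_iff_deriv.mp this).2.2
  have hddw : Differentiable ℝ (deriv w) := hC1.differentiable one_ne_zero
  have hcdw : Continuous (deriv w) := hddw.continuous
  have hcddw : Continuous (deriv (deriv w)) := (contDiff_one_iff_deriv.mp hC1).2
  -- sign of w'(x1)
  have hwx1 : 0 < w x1 := hpos x1 ⟨le_refl _, hx1L.le⟩
  have hdwx1 : 0 < deriv w x1 := by
    have : deriv w x1 = a2 * w x1 / d2 := by field_simp; linarith [hbc1]
    rw [this]; positivity
  constructor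
  · -- Part 1: maximum at L
    -- the key monotonicity step, given w ≤ h/q
    have key : (∀ x ∈ Icc x1 L, q * w x ≤ h) → ∀ x ∈ Icc x1 L, w x ≤ w L := by
      intro hle
      set k := a2 / d2 with hk
      have hdk : d2 * k = a2 := by rw [hk]; field_simp [hd2.ne']
      set g : ℝ → ℝ := fun x => exp (-k * x) * deriv w x with hgdef
      have hg : ∀ x : ℝ, HasDerivAt g
          (exp (-k * x) * (-k * 1) * deriv w x + exp (-k * x) * deriv (deriv w) x) x := by
        intro x
        exact (((hasDerivAt_id x).const_mul (-k)).exp).mul ((hddw x).hasDerivAt)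
      have hganti : AntitoneOn g (Icc x1 L) := by
        apply antitoneOn_of_deriv_nonpos (convex_Icc _ _)
          ((Real.continuous_exp.comp (continuous_const.mul continuous_id)).mul hcdw).continuousOn
          (fun x _ => (hg x).differentiableAt.differentiableWithinAt)
        intro x hx
        rw [interior_Icc] at hx
        have hxI : x ∈ Icc x1 L := Ioo_subset_Icc_self hx
        have hodex := hode x hxI
        have hlex := hle x hxI
        show deriv g x ≤ 0
        have hdg : deriv g x = exp (-k * x) * (deriv (deriv w) x - k * deriv w x) := by
          rw [(hg x).deriv]; ring
        rw [hdg]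
        have h2 : d2 * k * deriv w x = a2 * deriv w x := by rw [hdk]
        have h1 : d2 * (deriv (deriv w) x - k * deriv w x) ≤ 0 := by nlinarith [h2]
        have hs : deriv (deriv w) x - k * deriv w x ≤ 0 :=
          le_of_mul_le_mul_left (by linarith) hd2
        have he : 0 < exp (-k * x) := Real.exp_pos _
        nlinarith
      have hgL : g L = 0 := by simp [hgdef, hbc2]
      have hder : ∀ x ∈ Ioo x1 L, 0 ≤ deriv w x := by
        intro x hx
        have := hganti (Ioo_subset_Icc_self hx) (right_mem_Icc.2 hx1L.le) hx.2.le
        rw [hgL] at this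
        have this2 : 0 ≤ exp (-k * x) * deriv w x := this
        exact (mul_nonneg_iff_of_pos_left (Real.exp_pos _)).mp this2
      intro x hx
      have hmono : MonotoneOn w (Icc x1 L) :=
        monotoneOn_of_deriv_nonneg (convex_Icc _ _) hcw.continuousOn
          (fun y _ => (hdw y).differentiableWithinAt)
          (fun y hy => hder y (by rwa [interior_Icc] at hy))
      exact hmono hx (right_mem_Icc.2 hx1L.le) hx.2
    -- max point analysis
    obtain ⟨c, hcmem, hcmax⟩ := isCompact_Icc.exists_isMaxOn (nonempty_Icc.2 hx1L.le)
      hcw.continuousOn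
    rcases eq_or_lt_of_le hcmem.2 with hcL | hcL
    · intro x hx; rw [← hcL]; exact hcmax hx
    · rcases eq_or_lt_of_le hcmem.1 with hcx1 | hcx1
      · -- c = x1 : impossible, derivative positive there
        exfalso
        obtain ⟨e, he1, he2, he3⟩ := upstream_aux_exists_gt w hcw hcdw c L hcL
          (by rw [← hcx1]; exact hdwx1)
        exact absurd (hcmax ⟨hcmem.1.trans he1.le, he2⟩) (not_le.2 he3)
      · -- interior maximum: w c ≤ h / q
        have hloc : IsLocalMax w c := hcmax.isLocalMax (Icc_mem_nhds hcx1 hcL)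
        have hdc : deriv w c = 0 := hloc.deriv_eq_zero
        have hwc : q * w c ≤ h := by
          by_contra hgt
          push_neg at hgt
          have hodec := hode c hcmem
          have hddc : 0 < deriv (deriv w) c := by nlinarith [hd2]
          -- deriv w is positive just to the right of c
          obtain ⟨δ, hδ, hb⟩ := upstream_aux_local (deriv (deriv w)) hcddw c hddc
          set e := min (c + δ) L with hedef
          have hce : c < e := lt_min (by linarith) hcL
          have hdwpos : ∀ x ∈ Ioo c e, 0 < deriv w x := by
            intro x hx
            have hstr : StrictMonoOn (deriv w) (Icc c e) := by
              apply strictMonoOn_of_deriv_pos (convex_Icc _ _) hcdw.continuousOn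
              intro y hy
              rw [interior_Icc] at hy
              exact hb y ⟨hy.1.le, hy.2.le.trans (min_le_left _ _)⟩
            have := hstr (left_mem_Icc.2 hce.le) (Ioo_subset_Icc_self hx) hx.1
            rwa [hdc] at this
          have hlt : w c < w e := upstream_aux_lt w c e hcw.continuousOn hce hdwpos
          exact absurd (hcmax ⟨hcmem.1.trans hce.le, min_le_right _ _⟩) (not_le.2 hlt)
        apply key
        intro x hx
        have hxc : w x ≤ w c := hcmax hx
        nlinarith [mul_le_mul_of_nonneg_left hxc hq.le]
  · -- Part 2: bound on w L via integration
    have hint1 : ∫ x in x1..L, deriv (deriv w) x = deriv w L - deriv w x1 :=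
      intervalIntegral.integral_deriv_eq_sub (fun x _ => hddw x)
        (hcddw.intervalIntegrable _ _)
    have hint2 : ∫ x in x1..L, deriv w x = w L - w x1 :=
      intervalIntegral.integral_deriv_eq_sub (fun x _ => hdw x)
        (hcdw.intervalIntegrable _ _)
    have hcongr : ∫ x in x1..L, (d2 * deriv (deriv w) x - a2 * deriv w x + h)
        = ∫ x in x1..L, q * w x := by
      apply intervalIntegral.integral_congr
      intro x hx
      rw [uIcc_of_le hx1L.le] at hx
      have := hode x hx
      simp only
      linarith
    have hlin : ∫ x in x1..L, (d2 * deriv (deriv w) x - a2 * deriv w x + h)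
        = d2 * (deriv w L - deriv w x1) - a2 * (w L - w x1) + h * (L - x1) := by
      rw [intervalIntegral.integral_add (f := fun x => d2 * deriv (deriv w) x - a2 * deriv w x) (g := fun _ => h) ((((continuous_const.mul hcddw : Continuous fun x => d2 * deriv (deriv w) x)).sub
            ((continuous_const.mul hcdw : Continuous fun x => a2 * deriv w x))).intervalIntegrable _ _)
          (intervalIntegrable_const),
        intervalIntegral.integral_sub (f := fun x => d2 * deriv (deriv w) x) (g := fun x => a2 * deriv w x) (((continuous_const.mul hcddw : Continuous fun x => d2 * deriv (deriv w) x)).intervalIntegrable _ _)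
          (((continuous_const.mul hcdw : Continuous fun x => a2 * deriv w x)).intervalIntegrable _ _),
        intervalIntegral.integral_const_mul, intervalIntegral.integral_const_mul,
        hint1, hint2, intervalIntegral.integral_const, smul_eq_mul]
      ring
    have hIw : 0 < ∫ x in x1..L, w x :=
      intervalIntegral.intervalIntegral_pos_of_pos_on (hcw.intervalIntegrable _ _)
        (fun x hx => hpos x (Ioo_subset_Icc_self hx)) hx1L
    have hqI : ∫ x in x1..L, q * w x = q * ∫ x in x1..L, w x :=
      intervalIntegral.integral_const_mul _ _
    rw [lt_div_iff₀ ha2]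
    have := hcongr
    rw [hlin, hqI] at this
    nlinarith [mul_pos hq hIw]
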